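/- arXiv:2310.05596 — 2 statements merged into one kernel-verified Lean document; each statement's English description precedes it below -/
import Mathlib

section
/- Let θ¹, θ², θ³ ∈ (0,π) with θ¹ + θ² + θ³ = 2π and at least one θⁱ ≠ π/2, let α̃¹, α̃², α̃³ > 0 be such that sin θ¹/α̃¹ = sin θ²/α̃² = sin θ³/α̃³, and let 𝓘 be the matrix with rows (0, c²/s¹, −c³/s¹), (−c¹/s², 0, c³/s²), (c¹/s³, −c²/s³, 0) where sⁱ = sin θⁱ, cⁱ = cos θⁱ. Then for every nonzero vector N = (N¹,N²,N³) ∈ ℝ³ with α̃¹N¹ + α̃²N² + α̃³N³ = 0, one has 𝓘N ≠ 0. -/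
/-!
Multiplying the rows of `𝓘 N = 0` by `sⁱ` shows that `cⁱ Nⁱ = t` is the same for all `i`, and
Young's law makes the weights `α̃ⁱ` proportional to the sines, so `Σ sⁱ Nⁱ = 0`. Expanding
`sin (θ¹ + θ² + θ³) = sin 2π = 0` gives `Σ sⁱ cʲ cᵏ = s¹ s² s³`, and multiplying by `t` turns
the left side into `c¹ c² c³ Σ sⁱ Nⁱ = 0`, whence `t = 0`. Each `Nⁱ` with `cⁱ ≠ 0` then vanishes;
since the angles are below `π` and sum to `2π`, at most one cosine vanishes, and the weighted sum
kills the remaining component.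
-/

open Real

theorem Real.sin_add_add (a b c : ℝ) :
    sin (a + b + c) =
      sin a * cos b * cos c + cos a * sin b * cos c + cos a * cos b * sin c
        - sin a * sin b * sin c := by
  rw [sin_add, sin_add, cos_add]
  ring

theorem Real.cos_ne_zero_or_cos_ne_zero {a b : ℝ} (ha : a < π) (hb : b < π) (hab : π < a + b) :
    cos a ≠ 0 ∨ cos b ≠ 0 := by
  rcases lt_or_ge (π / 2) a with h | h
  · exact Or.inl (cos_neg_of_pi_div_two_lt_of_lt h (by linarith)).ne
  · exact Or.inr (cos_neg_of_pi_div_two_lt_of_lt (by linarith) (by linarith)).ne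

section TripleJunction

variable {s1 s2 s3 c1 c2 c3 : ℝ}

theorem mul_eq_mul_of_mulVec_eq_zero (hs1 : s1 ≠ 0) (hs2 : s2 ≠ 0) {N : Fin 3 → ℝ}
    (h : (!![0, c2 / s1, -(c3 / s1); -(c1 / s2), 0, c3 / s2; c1 / s3, -(c2 / s3), 0] :
      Matrix (Fin 3) (Fin 3) ℝ).mulVec N = 0) :
    c1 * N 0 = c3 * N 2 ∧ c2 * N 1 = c3 * N 2 := by
  have h0 := congrFun h 0
  have h1 := congrFun h 1
  simp only [Matrix.mulVec, dotProduct, Fin.sum_univ_three, Matrix.of_apply, Matrix.cons_val',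
    Matrix.cons_val_fin_one, Matrix.cons_val_zero, Matrix.cons_val_one, Matrix.cons_val, zero_mul,
    zero_add, add_zero, neg_mul, Pi.zero_apply] at h0 h1
  field_simp at h0 h1
  constructor <;> linarith

theorem weighted_sum_eq_zero_of_div_eq {α1 α2 α3 x1 x2 x3 : ℝ}
    (hα1 : α1 ≠ 0) (hα2 : α2 ≠ 0) (hα3 : α3 ≠ 0)
    (h12 : s1 / α1 = s2 / α2) (h23 : s2 / α2 = s3 / α3)
    (hx : α1 * x1 + α2 * x2 + α3 * x3 = 0) :
    s1 * x1 + s2 * x2 + s3 * x3 = 0 := by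
  have e1 : s1 = s1 / α1 * α1 := (div_mul_cancel₀ s1 hα1).symm
  have e2 : s2 = s1 / α1 * α2 := ((eq_div_iff hα2).1 h12).symm
  have e3 : s3 = s1 / α1 * α3 := ((eq_div_iff hα3).1 (h12.trans h23)).symm
  rw [e1, e2, e3]
  linear_combination s1 / α1 * hx

theorem common_value_eq_zero {x1 x2 x3 t : ℝ} (hs : s1 * s2 * s3 ≠ 0)
    (hsin : s1 * c2 * c3 + c1 * s2 * c3 + c1 * c2 * s3 = s1 * s2 * s3)
    (hx : s1 * x1 + s2 * x2 + s3 * x3 = 0)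
    (h1 : c1 * x1 = t) (h2 : c2 * x2 = t) (h3 : c3 * x3 = t) : t = 0 := by
  have : t * (s1 * s2 * s3) = 0 := by
    linear_combination c1 * c2 * c3 * hx - t * hsin - s1 * c2 * c3 * h1 - c1 * s2 * c3 * h2
      - c1 * c2 * s3 * h3
  exact (mul_eq_zero.1 this).resolve_right hs

theorem eq_zero_of_mul_eq_zero_of_weighted_sum {x1 x2 x3 : ℝ}
    (hs1 : s1 ≠ 0) (hs2 : s2 ≠ 0) (hs3 : s3 ≠ 0)
    (hc12 : c1 ≠ 0 ∨ c2 ≠ 0) (hc13 : c1 ≠ 0 ∨ c3 ≠ 0) (hc23 : c2 ≠ 0 ∨ c3 ≠ 0)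
    (h1 : c1 * x1 = 0) (h2 : c2 * x2 = 0) (h3 : c3 * x3 = 0)
    (hx : s1 * x1 + s2 * x2 + s3 * x3 = 0) :
    x1 = 0 ∧ x2 = 0 ∧ x3 = 0 := by
  rcases mul_eq_zero.1 h1 with h1 | h1 <;> rcases mul_eq_zero.1 h2 with h2 | h2 <;>
    rcases mul_eq_zero.1 h3 with h3 | h3 <;> simp_all

end TripleJunction

theorem stmt6_general (θ1 θ2 θ3 : ℝ)
    (hθ1 : θ1 ∈ Set.Ioo 0 Real.pi) (hθ2 : θ2 ∈ Set.Ioo 0 Real.pi)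
    (hθ3 : θ3 ∈ Set.Ioo 0 Real.pi) (hsum : θ1 + θ2 + θ3 = 2 * Real.pi)
    (α1 α2 α3 : ℝ) (hα1 : 0 < α1) (hα2 : 0 < α2) (hα3 : 0 < α3)
    (hyoung : Real.sin θ1 / α1 = Real.sin θ2 / α2 ∧
      Real.sin θ2 / α2 = Real.sin θ3 / α3)
    (N : Fin 3 → ℝ) (hN : N ≠ 0)
    (hsumN : α1 * N 0 + α2 * N 1 + α3 * N 2 = 0) :
    (!![0, Real.cos θ2 / Real.sin θ1, -(Real.cos θ3 / Real.sin θ1);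
        -(Real.cos θ1 / Real.sin θ2), 0, Real.cos θ3 / Real.sin θ2;
        Real.cos θ1 / Real.sin θ3, -(Real.cos θ2 / Real.sin θ3), 0] :
      Matrix (Fin 3) (Fin 3) ℝ).mulVec N ≠ 0 := by
  intro hI
  have hs1 := (sin_pos_of_pos_of_lt_pi hθ1.1 hθ1.2).ne'
  have hs2 := (sin_pos_of_pos_of_lt_pi hθ2.1 hθ2.2).ne'
  have hs3 := (sin_pos_of_pos_of_lt_pi hθ3.1 hθ3.2).ne'
  obtain ⟨h1, h2⟩ := mul_eq_mul_of_mulVec_eq_zero hs1 hs2 hI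
  have hsN := weighted_sum_eq_zero_of_div_eq hα1.ne' hα2.ne' hα3.ne' hyoung.1 hyoung.2 hsumN
  have hsin : sin θ1 * cos θ2 * cos θ3 + cos θ1 * sin θ2 * cos θ3 + cos θ1 * cos θ2 * sin θ3
      = sin θ1 * sin θ2 * sin θ3 := by
    linear_combination (sin_add_add θ1 θ2 θ3).symm.trans (by rw [hsum, sin_two_pi])
  have ht := common_value_eq_zero (mul_ne_zero (mul_ne_zero hs1 hs2) hs3) hsin hsN h1 h2 rfl
  obtain ⟨hN0, hN1, hN2⟩ := eq_zero_of_mul_eq_zero_of_weighted_sum hs1 hs2 hs3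
    (cos_ne_zero_or_cos_ne_zero hθ1.2 hθ2.2 (by linarith [hθ3.2]))
    (cos_ne_zero_or_cos_ne_zero hθ1.2 hθ3.2 (by linarith [hθ2.2]))
    (cos_ne_zero_or_cos_ne_zero hθ2.2 hθ3.2 (by linarith [hθ1.2]))
    (h1.trans ht) (h2.trans ht) ht hsN
  exact hN (by ext i; fin_cases i <;> assumption)

theorem stmt6 (θ1 θ2 θ3 : ℝ)
    (hθ1 : θ1 ∈ Set.Ioo 0 Real.pi) (hθ2 : θ2 ∈ Set.Ioo 0 Real.pi)
    (hθ3 : θ3 ∈ Set.Ioo 0 Real.pi) (hsum : θ1 + θ2 + θ3 = 2 * Real.pi)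
    (hnotall : θ1 ≠ Real.pi / 2 ∨ θ2 ≠ Real.pi / 2 ∨ θ3 ≠ Real.pi / 2)
    (α1 α2 α3 : ℝ) (hα1 : 0 < α1) (hα2 : 0 < α2) (hα3 : 0 < α3)
    (hyoung : Real.sin θ1 / α1 = Real.sin θ2 / α2 ∧
      Real.sin θ2 / α2 = Real.sin θ3 / α3)
    (N : Fin 3 → ℝ) (hN : N ≠ 0)
    (hsumN : α1 * N 0 + α2 * N 1 + α3 * N 2 = 0) :
    (!![0, Real.cos θ2 / Real.sin θ1, -(Real.cos θ3 / Real.sin θ1);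
        -(Real.cos θ1 / Real.sin θ2), 0, Real.cos θ3 / Real.sin θ2;
        Real.cos θ1 / Real.sin θ3, -(Real.cos θ2 / Real.sin θ3), 0] :
      Matrix (Fin 3) (Fin 3) ℝ).mulVec N ≠ 0 :=
  stmt6_general θ1 θ2 θ3 hθ1 hθ2 hθ3 hsum α1 α2 α3 hα1 hα2 hα3 hyoung N hN hsumN
end

section
/- Let Σ☆ ∈ ℝ², let τ☆ⁱ, ν☆ⁱ ∈ ℝ² (i = 1,2,3) be pairs of orthonormal vectors (ν☆ⁱ the 90° anticlockwise rotation of τ☆ⁱ), with angles θⁱ ∈ (0,π) between consecutive normals summing to 2π, and let α̃ⁱ > 0 satisfy sin θⁱ/α̃ⁱ all equal. Given points P¹, P², P³ ∈ ℝ² with Pⁱ − Σ☆ = Nⁱν☆ⁱ + Tⁱτ☆ⁱ, the condition P¹ = P² = P³ is equivalent to: (a) Σᵢ α̃ⁱNⁱ = 0, and (b) (T¹,T²,T³)ᵀ = 𝓘(N¹,N²,N³)ᵀ where 𝓘 has rows (0, c²/s¹, −c³/s¹), (−c¹/s², 0, c³/s²), (c¹/s³, −c²/s³, 0) with sⁱ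 = sin θⁱ, cⁱ = cos θⁱ. -/
/-!
Write `X = Pⁱ - Σ☆`; in the orthonormal frame `(νⁱ, τⁱ)` its coordinates are `Nⁱ = ⟪X, νⁱ⟫`,
`Tⁱ = ⟪X, τⁱ⟫`. Since the angles add up to `2π`, the normals and tangents satisfy
`∑ sin θⁱ νⁱ = 0` and `sin θ¹ τ¹ = cos θ² ν² - cos θ³ ν³` (and cyclically); pairing these with a
common `X` gives the relations. Conversely the relations are linear and determine
`(N², N³, T², T³)` from `(N¹, T¹)`, so they force the coordinates of every `Pⁱ - Σ☆` to be those of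
`P¹ - Σ☆`. Young's law `sin θⁱ / α̃ⁱ = const` converts `∑ sin θⁱ Nⁱ = 0` into `∑ α̃ⁱ Nⁱ = 0`.
-/

noncomputable section

abbrev E2 := EuclideanSpace ℝ (Fin 2)

/-- Anticlockwise rotation by 90 degrees in ℝ². -/
def rot90 (v : E2) : E2 :=
  (WithLp.equiv 2 (Fin 2 → ℝ)).symm ![-(v 1), v 0]

/-- Anticlockwise rotation by angle θ in ℝ². -/
def rotAngle (θ : ℝ) (v : E2) : E2 :=
  (WithLp.equiv 2 (Fin 2 → ℝ)).symm
    ![Real.cos θ * v 0 - Real.sin θ * v 1, Real.sin θ * v 0 + Real.cos θ * v 1]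

open Real
open scoped RealInnerProductSpace

@[simp] lemma rot90_apply_zero (v : E2) : rot90 v 0 = -v 1 := rfl

@[simp] lemma rot90_apply_one (v : E2) : rot90 v 1 = v 0 := rfl

@[simp] lemma rotAngle_apply_zero (θ : ℝ) (v : E2) :
    rotAngle θ v 0 = cos θ * v 0 - sin θ * v 1 := rfl

@[simp] lemma rotAngle_apply_one (θ : ℝ) (v : E2) :
    rotAngle θ v 1 = sin θ * v 0 + cos θ * v 1 := rfl

lemma rotAngle_eq (θ : ℝ) (v : E2) : rotAngle θ v = cos θ • v + sin θ • rot90 v := by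
  ext i
  fin_cases i <;>
    simp only [Fin.zero_eta, Fin.mk_one, Fin.isValue, PiLp.add_apply, PiLp.smul_apply, smul_eq_mul,
      rot90_apply_zero, rot90_apply_one, rotAngle_apply_zero, rotAngle_apply_one] <;> ring

lemma rot90_rot90 (v : E2) : rot90 (rot90 v) = -v := by
  ext i; fin_cases i <;> simp

lemma rotAngle_rotAngle (a b : ℝ) (v : E2) : rotAngle a (rotAngle b v) = rotAngle (a + b) v := by
  ext i
  fin_cases i <;> simp only [Fin.zero_eta, Fin.mk_one, Fin.isValue, rotAngle_apply_zero,
    rotAngle_apply_one, cos_add, sin_add] <;> ring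

namespace E2

lemma inner_eq (x y : E2) : ⟪x, y⟫ = x 0 * y 0 + x 1 * y 1 := by
  simp only [EuclideanSpace.inner_eq_star_dotProduct, dotProduct, Pi.star_apply, star_trivial,
    Fin.sum_univ_two, Fin.isValue]
  ring

lemma norm_sq_eq (x : E2) : ‖x‖ ^ 2 = x 0 ^ 2 + x 1 ^ 2 := by
  rw [← real_inner_self_eq_norm_sq, inner_eq]; ring

end E2

lemma eq_smul_rot90_add_smul_iff {u : E2} (hu : ‖u‖ = 1) {x : E2} {N T : ℝ} :
    x = N • rot90 u + T • u ↔ N = ⟪x, rot90 u⟫ ∧ T = ⟪x, u⟫ := by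
  have hu2 : u 0 ^ 2 + u 1 ^ 2 = 1 := by rw [← E2.norm_sq_eq, hu, one_pow]
  constructor
  · rintro rfl
    simp only [E2.inner_eq, PiLp.add_apply, PiLp.smul_apply, smul_eq_mul, rot90_apply_zero,
      rot90_apply_one]
    constructor
    · linear_combination -N * hu2
    · linear_combination -T * hu2
  · rintro ⟨rfl, rfl⟩
    ext i
    fin_cases i <;> simp only [Fin.zero_eta, Fin.mk_one, Fin.isValue, E2.inner_eq, PiLp.add_apply,
      PiLp.smul_apply, smul_eq_mul, rot90_apply_zero, rot90_apply_one]
    · linear_combination -(x 0) * hu2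
    · linear_combination -(x 1) * hu2

section Junction

variable {a b c : ℝ} {ν ν' ν'' : E2}

lemma sin_eq_of_add_add_eq_two_pi (habc : a + b + c = 2 * π) :
    sin a = -(sin b * cos c + cos b * sin c) := by
  rw [show a = 2 * π - (b + c) by linarith, sin_two_pi_sub, sin_add]

lemma rotAngle_rotAngle_of_add_add_eq_two_pi (habc : a + b + c = 2 * π) (ν : E2) :
    rotAngle a (rotAngle c ν) = cos b • ν - sin b • rot90 ν := by
  rw [rotAngle_rotAngle, show a + c = 2 * π - b by linarith, rotAngle_eq, cos_two_pi_sub,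
    sin_two_pi_sub, neg_smul, ← sub_eq_add_neg]

lemma sin_smul_add_sin_smul_add_sin_smul (habc : a + b + c = 2 * π)
    (hν' : ν' = rotAngle c ν) (hν'' : ν'' = rotAngle a ν') :
    sin a • ν + sin b • ν' + sin c • ν'' = 0 := by
  subst hν' hν''
  rw [rotAngle_rotAngle_of_add_add_eq_two_pi habc, rotAngle_eq]
  linear_combination (norm := module) sin_eq_of_add_add_eq_two_pi habc • ν

lemma sin_smul_eq_cos_smul_sub_cos_smul {τ : E2} (habc : a + b + c = 2 * π) (hν : ν = rot90 τ)
    (hν' : ν' = rotAngle c ν) (hν'' : ν'' = rotAngle a ν') :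
    sin a • τ = cos b • ν' - cos c • ν'' := by
  subst hν hν' hν''
  rw [rotAngle_rotAngle_of_add_add_eq_two_pi habc, rotAngle_eq, rot90_rot90]
  linear_combination (norm := module) sin_eq_of_add_add_eq_two_pi habc • τ

end Junction

/-- Conditions (a) and (b) with the denominators `sin θⁱ` cleared and the weights `α̃ⁱ` replaced
by the proportional `sin θⁱ`. -/
def JunctionRelations (θ1 θ2 θ3 N1 N2 N3 T1 T2 T3 : ℝ) : Prop :=
  sin θ1 * N1 + sin θ2 * N2 + sin θ3 * N3 = 0 ∧
    sin θ1 * T1 = cos θ2 * N2 - cos θ3 * N3 ∧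
    sin θ2 * T2 = cos θ3 * N3 - cos θ1 * N1 ∧
    sin θ3 * T3 = cos θ1 * N1 - cos θ2 * N2

lemma junctionRelations_inner {θ1 θ2 θ3 : ℝ} {τ1 τ2 τ3 ν1 ν2 ν3 : E2}
    (hsum : θ1 + θ2 + θ3 = 2 * π)
    (hν1 : ν1 = rot90 τ1) (hν2 : ν2 = rot90 τ2) (hν3 : ν3 = rot90 τ3)
    (h12 : ν2 = rotAngle θ3 ν1) (h23 : ν3 = rotAngle θ1 ν2) (h31 : ν1 = rotAngle θ2 ν3)
    (X : E2) :
    JunctionRelations θ1 θ2 θ3 ⟪X, ν1⟫ ⟪X, ν2⟫ ⟪X, ν3⟫ ⟪X, τ1⟫ ⟪X, τ2⟫ ⟪X, τ3⟫ := by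
  have hsum2 : θ2 + θ3 + θ1 = 2 * π := by linarith
  have hsum3 : θ3 + θ1 + θ2 = 2 * π := by linarith
  refine ⟨?_, ?_, ?_, ?_⟩
  · simpa [inner_add_right, inner_smul_right] using
      congrArg (⟪X, ·⟫) (sin_smul_add_sin_smul_add_sin_smul hsum h12 h23)
  · simpa [inner_sub_right, inner_smul_right] using
      congrArg (⟪X, ·⟫) (sin_smul_eq_cos_smul_sub_cos_smul hsum hν1 h12 h23)
  · simpa [inner_sub_right, inner_smul_right] using
      congrArg (⟪X, ·⟫) (sin_smul_eq_cos_smul_sub_cos_smul hsum2 hν2 h23 h31)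
  · simpa [inner_sub_right, inner_smul_right] using
      congrArg (⟪X, ·⟫) (sin_smul_eq_cos_smul_sub_cos_smul hsum3 hν3 h31 h12)

lemma JunctionRelations.eq_of_eq {θ1 θ2 θ3 N1 N2 N3 T1 T2 T3 N2' N3' T2' T3' : ℝ}
    (hs1 : sin θ1 ≠ 0) (hs2 : sin θ2 ≠ 0) (hs3 : sin θ3 ≠ 0) (hsum : θ1 + θ2 + θ3 = 2 * π)
    (h : JunctionRelations θ1 θ2 θ3 N1 N2 N3 T1 T2 T3)
    (h' : JunctionRelations θ1 θ2 θ3 N1 N2' N3' T1 T2' T3') :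
    N2 = N2' ∧ N3 = N3' ∧ T2 = T2' ∧ T3 = T3' := by
  obtain ⟨hN, hT1, hT2, hT3⟩ := h
  obtain ⟨hN', hT1', hT2', hT3'⟩ := h'
  -- the determinant of the system for `(N2, N3)` given by `(a)` and `(b¹)` is `-sin θ1`
  have hs := sin_eq_of_add_add_eq_two_pi hsum
  have hN2 : N2 = N2' := mul_left_cancel₀ hs1 <| by
    linear_combination (N2 - N2') * hs - cos θ3 * (hN - hN') + sin θ3 * (hT1 - hT1')
  have hN3 : N3 = N3' := mul_left_cancel₀ hs1 <| by
    linear_combination (N3 - N3') * hs - cos θ2 * (hN - hN') - sin θ2 * (hT1 - hT1')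
  exact ⟨hN2, hN3, mul_left_cancel₀ hs2 (by rw [hT2, hT2', hN3]),
    mul_left_cancel₀ hs3 (by rw [hT3, hT3', hN2])⟩

theorem eq_and_eq_iff_junctionRelations {θ1 θ2 θ3 : ℝ}
    (hs1 : sin θ1 ≠ 0) (hs2 : sin θ2 ≠ 0) (hs3 : sin θ3 ≠ 0) (hsum : θ1 + θ2 + θ3 = 2 * π)
    {τ1 τ2 τ3 ν1 ν2 ν3 : E2} (hτ1 : ‖τ1‖ = 1) (hτ2 : ‖τ2‖ = 1) (hτ3 : ‖τ3‖ = 1)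
    (hν1 : ν1 = rot90 τ1) (hν2 : ν2 = rot90 τ2) (hν3 : ν3 = rot90 τ3)
    (h12 : ν2 = rotAngle θ3 ν1) (h23 : ν3 = rotAngle θ1 ν2) (h31 : ν1 = rotAngle θ2 ν3)
    {Sj P1 P2 P3 : E2} {N1 N2 N3 T1 T2 T3 : ℝ}
    (hP1 : P1 - Sj = N1 • ν1 + T1 • τ1) (hP2 : P2 - Sj = N2 • ν2 + T2 • τ2)
    (hP3 : P3 - Sj = N3 • ν3 + T3 • τ3) :
    (P1 = P2 ∧ P2 = P3) ↔ JunctionRelations θ1 θ2 θ3 N1 N2 N3 T1 T2 T3 := by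
  have relations := junctionRelations_inner hsum hν1 hν2 hν3 h12 h23 h31 (P1 - Sj)
  subst hν1 hν2 hν3
  obtain ⟨rfl, rfl⟩ := (eq_smul_rot90_add_smul_iff hτ1).1 hP1
  constructor
  · rintro ⟨rfl, rfl⟩
    obtain ⟨rfl, rfl⟩ := (eq_smul_rot90_add_smul_iff hτ2).1 hP2
    obtain ⟨rfl, rfl⟩ := (eq_smul_rot90_add_smul_iff hτ3).1 hP3
    exact relations
  · intro h
    obtain ⟨hN2, hN3, hT2, hT3⟩ := h.eq_of_eq hs1 hs2 hs3 hsum relations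
    have hP21 : P2 = P1 :=
      sub_left_inj.1 (hP2.trans ((eq_smul_rot90_add_smul_iff hτ2).2 ⟨hN2, hT2⟩).symm)
    have hP31 : P3 = P1 :=
      sub_left_inj.1 (hP3.trans ((eq_smul_rot90_add_smul_iff hτ3).2 ⟨hN3, hT3⟩).symm)
    exact ⟨hP21.symm, hP21.trans hP31.symm⟩

lemma sum_mul_eq_zero_iff_of_div_eq {K : Type*} [Field K] {s1 s2 s3 α1 α2 α3 : K}
    (hs1 : s1 ≠ 0) (hα1 : α1 ≠ 0) (h12 : s1 / α1 = s2 / α2) (h23 : s2 / α2 = s3 / α3)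
    (N1 N2 N3 : K) :
    α1 * N1 + α2 * N2 + α3 * N3 = 0 ↔ s1 * N1 + s2 * N2 + s3 * N3 = 0 := by
  set k := s1 / α1
  have hk : k ≠ 0 := div_ne_zero hs1 hα1
  have eq_mul {s α : K} (h : s / α = k) : s = k * α :=
    (div_eq_iff (div_ne_zero_iff.1 (h ▸ hk)).2).1 h
  have hsum : s1 * N1 + s2 * N2 + s3 * N3 = k * (α1 * N1 + α2 * N2 + α3 * N3) := by
    linear_combination N1 * eq_mul rfl + N2 * eq_mul h12.symm + N3 * eq_mul (h12.trans h23).symm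
  rw [hsum, mul_eq_zero, or_iff_right hk]

lemma eq_div_mul_sub_div_mul_iff {K : Type*} [Field K] {s t a b x y : K} (hs : s ≠ 0) :
    t = a / s * x - b / s * y ↔ s * t = a * x - b * y := by
  rw [div_mul_eq_mul_div, div_mul_eq_mul_div, div_sub_div_same, eq_div_iff hs, mul_comm]

theorem stmt8_general (θ1 θ2 θ3 : ℝ)
    (hθ1 : θ1 ∈ Set.Ioo 0 Real.pi) (hθ2 : θ2 ∈ Set.Ioo 0 Real.pi)
    (hθ3 : θ3 ∈ Set.Ioo 0 Real.pi) (hsum : θ1 + θ2 + θ3 = 2 * Real.pi)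
    (τ1 τ2 τ3 : E2) (hτ1 : ‖τ1‖ = 1) (hτ2 : ‖τ2‖ = 1) (hτ3 : ‖τ3‖ = 1)
    (ν1 ν2 ν3 : E2) (hν1 : ν1 = rot90 τ1) (hν2 : ν2 = rot90 τ2) (hν3 : ν3 = rot90 τ3)
    (h12 : ν2 = rotAngle θ3 ν1) (h23 : ν3 = rotAngle θ1 ν2) (h31 : ν1 = rotAngle θ2 ν3)
    (α1 α2 α3 : ℝ) (hα1 : 0 < α1)
    (hyoung : Real.sin θ1 / α1 = Real.sin θ2 / α2 ∧
      Real.sin θ2 / α2 = Real.sin θ3 / α3)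
    (Sj P1 P2 P3 : E2) (N1 N2 N3 T1 T2 T3 : ℝ)
    (hP1 : P1 - Sj = N1 • ν1 + T1 • τ1)
    (hP2 : P2 - Sj = N2 • ν2 + T2 • τ2)
    (hP3 : P3 - Sj = N3 • ν3 + T3 • τ3) :
    (P1 = P2 ∧ P2 = P3) ↔
      (α1 * N1 + α2 * N2 + α3 * N3 = 0 ∧
        T1 = Real.cos θ2 / Real.sin θ1 * N2 - Real.cos θ3 / Real.sin θ1 * N3 ∧
        T2 = -(Real.cos θ1 / Real.sin θ2) * N1 + Real.cos θ3 / Real.sin θ2 * N3 ∧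
        T3 = Real.cos θ1 / Real.sin θ3 * N1 - Real.cos θ2 / Real.sin θ3 * N2) := by
  have hs1 := (sin_pos_of_pos_of_lt_pi hθ1.1 hθ1.2).ne'
  have hs2 := (sin_pos_of_pos_of_lt_pi hθ2.1 hθ2.2).ne'
  have hs3 := (sin_pos_of_pos_of_lt_pi hθ3.1 hθ3.2).ne'
  rw [eq_and_eq_iff_junctionRelations hs1 hs2 hs3 hsum hτ1 hτ2 hτ3 hν1 hν2 hν3 h12 h23 h31
      hP1 hP2 hP3, JunctionRelations,
    sum_mul_eq_zero_iff_of_div_eq hs1 hα1.ne' hyoung.1 hyoung.2, neg_mul, neg_add_eq_sub,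
    eq_div_mul_sub_div_mul_iff hs1, eq_div_mul_sub_div_mul_iff hs2, eq_div_mul_sub_div_mul_iff hs3]

theorem stmt8 (θ1 θ2 θ3 : ℝ)
    (hθ1 : θ1 ∈ Set.Ioo 0 Real.pi) (hθ2 : θ2 ∈ Set.Ioo 0 Real.pi)
    (hθ3 : θ3 ∈ Set.Ioo 0 Real.pi) (hsum : θ1 + θ2 + θ3 = 2 * Real.pi)
    (τ1 τ2 τ3 : E2) (hτ1 : ‖τ1‖ = 1) (hτ2 : ‖τ2‖ = 1) (hτ3 : ‖τ3‖ = 1)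
    (ν1 ν2 ν3 : E2) (hν1 : ν1 = rot90 τ1) (hν2 : ν2 = rot90 τ2) (hν3 : ν3 = rot90 τ3)
    (h12 : ν2 = rotAngle θ3 ν1) (h23 : ν3 = rotAngle θ1 ν2) (h31 : ν1 = rotAngle θ2 ν3)
    (α1 α2 α3 : ℝ) (hα1 : 0 < α1) (hα2 : 0 < α2) (hα3 : 0 < α3)
    (hyoung : Real.sin θ1 / α1 = Real.sin θ2 / α2 ∧
      Real.sin θ2 / α2 = Real.sin θ3 / α3)
    (Sj P1 P2 P3 : E2) (N1 N2 N3 T1 T2 T3 : ℝ)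
    (hP1 : P1 - Sj = N1 • ν1 + T1 • τ1)
    (hP2 : P2 - Sj = N2 • ν2 + T2 • τ2)
    (hP3 : P3 - Sj = N3 • ν3 + T3 • τ3) :
    (P1 = P2 ∧ P2 = P3) ↔
      (α1 * N1 + α2 * N2 + α3 * N3 = 0 ∧
        T1 = Real.cos θ2 / Real.sin θ1 * N2 - Real.cos θ3 / Real.sin θ1 * N3 ∧
        T2 = -(Real.cos θ1 / Real.sin θ2) * N1 + Real.cos θ3 / Real.sin θ2 * N3 ∧
        T3 = Real.cos θ1 / Real.sin θ3 * N1 - Real.cos θ2 / Real.sin θ3 * N2) :=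
  stmt8_general θ1 θ2 θ3 hθ1 hθ2 hθ3 hsum τ1 τ2 τ3 hτ1 hτ2 hτ3 ν1 ν2 ν3 hν1 hν2 hν3 h12 h23 h31 α1
    α2 α3 hα1 hyoung Sj P1 P2 P3 N1 N2 N3 T1 T2 T3 hP1 hP2 hP3
end
end
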